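/- (Lemma 4.9, error propagation for the last policy) For every realization of the samples and every k ∈ {1,…,K}: 0 ≤ V* − V^{π_k} ≤ 2H(α^k + A_{γ,k}/A_∞)·1 + (1/A_∞)·(𝒩^{π_k}π_k − 𝒩^{π*}π_*)E_k + (1/A_∞)·Σ_{j=1}^k γ^j (𝒩^{π*}π_* P_{k+1−j}^k − 𝒩^{π_k}π_k P_{k−j}^{k−1}) E'_{k+1−j}, where 𝒩^π := Σ_{t=0}^∞ (γπP)^t for any policy π and E'_{k+1−j} := ε_{k+1−j} − (1−α)E_{k−j} with E_0 := 0. -/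

import Mathlib

open MeasureTheory ProbabilityTheory Finset Real

noncomputable section

/-- The transition kernel `P` applied to a state-value function:
`(Pv)(x,a) = Σ_z P(z|x,a) v(z)`. -/
def mdpP {S A : Type} [Fintype S] (P : S → A → S → ℝ) (v : S → ℝ) : S → A → ℝ :=
  fun x a => ∑ z, P x a z * v z

/-- A policy applied to a Q-function: `(poq)(x) = Σ_a po(a|x) q(x,a)`. -/
def polAct {S A : Type} [Fintype A] (po : S → A → ℝ) (q : S → A → ℝ) : S → ℝ :=
  fun x => ∑ a, po x a * q x a

/-- `P` is a transition kernel. -/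
def IsKernel {S A : Type} [Fintype S] (P : S → A → S → ℝ) : Prop :=
  (∀ x a z, 0 ≤ P x a z) ∧ ∀ x a, ∑ z, P x a z = 1

/-- `po` is a (Markov) policy. -/
def IsPolicy {S A : Type} [Fintype A] (po : S → A → ℝ) : Prop :=
  (∀ x a, 0 ≤ po x a) ∧ ∀ x, ∑ a, po x a = 1

/-- The deterministic policy induced by `d : S → A`. -/
def detPol {S A : Type} [DecidableEq A] (d : S → A) : S → A → ℝ :=
  fun x a => if a = d x then 1 else 0

/-- The Bellman operator `T^po q = r + γ P (po q)`. -/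
def bellmanOp {S A : Type} [Fintype S] [Fintype A] (P : S → A → S → ℝ) (r : S → A → ℝ)
    (γ : ℝ) (po : S → A → ℝ) (qf : S → A → ℝ) : S → A → ℝ :=
  fun x a => r x a + γ * mdpP P (polAct po qf) x a

/-- `P^po = Ppo` acting on Q-functions. -/
def Ppi {S A : Type} [Fintype S] [Fintype A] (P : S → A → S → ℝ) (po : S → A → ℝ)
    (qf : S → A → ℝ) : S → A → ℝ :=
  mdpP P (polAct po qf)

/-- `PprodN P po j n` is `P^{po_{j+n-1}} ⋯ P^{po_j}` (`n` factors, identity for `n = 0`);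
this is `P_j^i` of the paper with `n = i + 1 - j` factors. -/
def PprodN {S A : Type} [Fintype S] [Fintype A] (P : S → A → S → ℝ)
    (po : ℕ → S → A → ℝ) (j : ℕ) : ℕ → (S → A → ℝ) → S → A → ℝ
  | 0, qf => qf
  | n + 1, qf => Ppi P (po (j + n)) (PprodN P po j n qf)

/-- The conditional standard deviation `σ(v)(x,a) = √(P(v²)(x,a) − (Pv)(x,a)²)`. -/
def sigmaP {S A : Type} [Fintype S] (P : S → A → S → ℝ) (v : S → ℝ) : S → A → ℝ :=
  fun x a => Real.sqrt (mdpP P (fun z => v z ^ 2) x a - (mdpP P v x a) ^ 2)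

/-- `𝒩^po = Σ_{t=0}^∞ (γ po P)^t` acting on state-value functions. -/
def Npol {S A : Type} [Fintype S] [Fintype A] (P : S → A → S → ℝ) (γ : ℝ)
    (po : S → A → ℝ) (vf : S → ℝ) : S → ℝ :=
  fun x => ∑' t : ℕ, ((fun uf : S → ℝ => fun z => γ * polAct po (mdpP P uf) z)^[t] vf) x

/-!
Let `q = (1-α) s_k`. For every policy `π`, `V^π - π q = 𝒩^π π (T^π q - q)`, and `π* q ≤ π_k q`
because `π_k` is greedy for `s_k`; hence
`V* - V^{π_k} ≤ 𝒩^{π*} π* (T^{π*} q - q) - 𝒩^{π_k} π_k (T^{π_k} q - q)`.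
Both Bellman residuals equal `α^k r - (1-α) E_k + γ P (π q - (1-α) w_{k-1})`. The increments
`Δ_m = (1-α) (s_{m+1} - s_m)` satisfy `Δ_{m+1} = F_{m+1} + γ P ((1-α) (w_{m+1} - w_m))` with
`F_m = (1-α) (α^m r + ε_{m+1} - (1-α) E_m)`, and greediness sandwiches `(1-α) (w_{m+1} - w_m)`
between `π_m Δ_m` and `π_{m+1} Δ_m`. Unrolling this recursion bounds the residual of `π*` from
above by a rollout of `F` along `π_k, π_{k-1}, …` and the residual of `π_k` from below by a
rollout along `π_{k-1}, π_{k-2}, …`. The reward part of `F` contributes at most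
`H (α^k + A_{γ,k}/A_∞)` to each side, and what remains are the stated error terms.
-/

section Operators

variable {S A : Type}

theorem abs_sum_mul_le_of_stochastic {ι : Type*} [Fintype ι] {p f : ι → ℝ} {c : ℝ}
    (hp0 : ∀ i, 0 ≤ p i) (hp1 : ∑ i, p i = 1) (hf : ∀ i, |f i| ≤ c) :
    |∑ i, p i * f i| ≤ c :=
  calc |∑ i, p i * f i| ≤ ∑ i, p i * c := by
        refine (abs_sum_le_sum_abs _ _).trans (sum_le_sum fun i _ => ?_)
        rw [abs_mul, abs_of_nonneg (hp0 i)]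
        exact mul_le_mul_of_nonneg_left (hf i) (hp0 i)
    _ = c := by rw [← sum_mul, hp1, one_mul]

theorem detPol_isPolicy [Fintype A] [DecidableEq A] (d : S → A) : IsPolicy (detPol d) :=
  ⟨fun x a => by unfold detPol; split_ifs <;> norm_num, fun x => by simp [detPol]⟩

theorem polAct_detPol [Fintype A] [DecidableEq A] (d : S → A) (q : S → A → ℝ) (x : S) :
    polAct (detPol d) q x = q x (d x) := by
  simp [polAct, detPol]

def mdpPₗ [Fintype S] (P : S → A → S → ℝ) : (S → ℝ) →ₗ[ℝ] S → A → ℝ where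
  toFun := mdpP P
  map_add' u v := by ext x a; simp [mdpP, mul_add, sum_add_distrib]
  map_smul' c u := by ext x a; simp [mdpP, mul_sum, mul_left_comm]

theorem coe_mdpPₗ [Fintype S] (P : S → A → S → ℝ) : ⇑(mdpPₗ P) = mdpP P := rfl

def polActₗ [Fintype A] (po : S → A → ℝ) : (S → A → ℝ) →ₗ[ℝ] S → ℝ where
  toFun := polAct po
  map_add' u v := by ext x; simp [polAct, mul_add, sum_add_distrib]
  map_smul' c u := by ext x; simp [polAct, mul_sum, mul_left_comm]

theorem mdpP_mono [Fintype S] {P : S → A → S → ℝ} (hP : IsKernel P) : Monotone (mdpP P) :=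
  fun _ _ h x a => sum_le_sum fun z _ => mul_le_mul_of_nonneg_left (h z) (hP.1 x a z)

theorem polAct_mono [Fintype A] {po : S → A → ℝ} (hpo : IsPolicy po) : Monotone (polAct po) :=
  fun _ _ h x => sum_le_sum fun a _ => mul_le_mul_of_nonneg_left (h x a) (hpo.1 x a)

theorem polAct_le_of_forall_le [Fintype A] {po : S → A → ℝ} (hpo : IsPolicy po)
    {q : S → A → ℝ} {x : S} {c : ℝ} (h : ∀ a, q x a ≤ c) : polAct po q x ≤ c :=
  calc polAct po q x ≤ ∑ a, po x a * c :=
        sum_le_sum fun a _ => mul_le_mul_of_nonneg_left (h a) (hpo.1 x a)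
    _ = c := by rw [← sum_mul, hpo.2 x, one_mul]

theorem abs_mdpP_le [Fintype S] {P : S → A → S → ℝ} (hP : IsKernel P) {v : S → ℝ} {c : ℝ}
    (hv : ∀ z, |v z| ≤ c) (x : S) (a : A) : |mdpP P v x a| ≤ c :=
  abs_sum_mul_le_of_stochastic (hP.1 x a) (hP.2 x a) hv

theorem abs_polAct_le [Fintype A] {po : S → A → ℝ} (hpo : IsPolicy po) {q : S → A → ℝ} {c : ℝ}
    (hq : ∀ x a, |q x a| ≤ c) (x : S) : |polAct po q x| ≤ c :=
  abs_sum_mul_le_of_stochastic (hpo.1 x) (hpo.2 x) (hq x)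

variable [Fintype S] [Fintype A]

theorem bellmanOp_eq (P : S → A → S → ℝ) (r : S → A → ℝ)
    (γ : ℝ) (po q : S → A → ℝ) : bellmanOp P r γ po q = r + γ • mdpP P (polAct po q) := rfl

def Ppiₗ (P : S → A → S → ℝ) (po : S → A → ℝ) : Module.End ℝ (S → A → ℝ) :=
  mdpPₗ P ∘ₗ polActₗ po

theorem coe_Ppiₗ (P : S → A → S → ℝ) (po : S → A → ℝ) : ⇑(Ppiₗ P po) = Ppi P po := rfl

theorem Ppi_mono {P : S → A → S → ℝ} (hP : IsKernel P) {po : S → A → ℝ} (hpo : IsPolicy po) :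
    Monotone (Ppi P po) :=
  (mdpP_mono hP).comp (polAct_mono hpo)

theorem PprodN_succ (P : S → A → S → ℝ) (σ : ℕ → S → A → ℝ) (s n : ℕ) (q : S → A → ℝ) :
    PprodN P σ s (n + 1) q = Ppi P (σ (s + n)) (PprodN P σ s n q) := rfl

def PprodNₗ (P : S → A → S → ℝ) (σ : ℕ → S → A → ℝ) (s : ℕ) : ℕ → Module.End ℝ (S → A → ℝ)
  | 0 => 1
  | n + 1 => Ppiₗ P (σ (s + n)) * PprodNₗ P σ s n

theorem coe_PprodNₗ (P : S → A → S → ℝ) (σ : ℕ → S → A → ℝ) (s : ℕ) :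
    ∀ n, ⇑(PprodNₗ P σ s n) = PprodN P σ s n
  | 0 => rfl
  | n + 1 => by
    ext q : 1
    simp only [PprodNₗ, Module.End.mul_apply, coe_PprodNₗ P σ s n, coe_Ppiₗ, PprodN_succ]

theorem abs_PprodN_le {P : S → A → S → ℝ} (hP : IsKernel P) {σ : ℕ → S → A → ℝ}
    (hσ : ∀ i, IsPolicy (σ i)) {q : S → A → ℝ} {c : ℝ} (hq : ∀ x a, |q x a| ≤ c) (s : ℕ) :
    ∀ n x a, |PprodN P σ s n q x a| ≤ c
  | 0 => hq
  | n + 1 => abs_mdpP_le hP (abs_polAct_le (hσ (s + n)) (abs_PprodN_le hP hσ hq s n))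

end Operators

section Resolvent

variable {S A : Type} [Fintype S] [Fintype A] {P : S → A → S → ℝ} {γ : ℝ} {po : S → A → ℝ}

def discountedStepₗ (P : S → A → S → ℝ) (γ : ℝ) (po : S → A → ℝ) : Module.End ℝ (S → ℝ) :=
  γ • (polActₗ po ∘ₗ mdpPₗ P)

theorem Npol_eq_tsum (P : S → A → S → ℝ) (γ : ℝ) (po : S → A → ℝ) (v : S → ℝ) (x : S) :
    Npol P γ po v x = ∑' t : ℕ, (discountedStepₗ P γ po ^ t) v x := by
  simp only [Npol, Module.End.pow_apply]
  rfl

theorem discountedStepₗ_mono (hP : IsKernel P) (hpo : IsPolicy po) (hγ0 : 0 ≤ γ) :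
    Monotone (discountedStepₗ P γ po) :=
  fun _ _ h z => mul_le_mul_of_nonneg_left (polAct_mono hpo (mdpP_mono hP h) z) hγ0

theorem abs_discountedStepₗ_pow_le (hP : IsKernel P) (hpo : IsPolicy po) (hγ0 : 0 ≤ γ) {v : S → ℝ}
    {c : ℝ} (hv : ∀ z, |v z| ≤ c) : ∀ t z, |(discountedStepₗ P γ po ^ t) v z| ≤ γ ^ t * c
  | 0, z => by simpa using hv z
  | t + 1, z => by
    rw [pow_succ' (discountedStepₗ P γ po) t, Module.End.mul_apply, pow_succ' γ t, mul_assoc]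
    change |γ * polAct po (mdpP P _) z| ≤ _
    rw [abs_mul, abs_of_nonneg hγ0]
    exact mul_le_mul_of_nonneg_left
      (abs_polAct_le hpo (abs_mdpP_le hP (abs_discountedStepₗ_pow_le hP hpo hγ0 hv t)) z) hγ0

theorem hasSum_geometric_mul (hγ0 : 0 ≤ γ) (hγ1 : γ < 1) (c : ℝ) :
    HasSum (fun t : ℕ => γ ^ t * c) (c / (1 - γ)) := by
  simpa [div_eq_inv_mul] using (hasSum_geometric_of_lt_one hγ0 hγ1).mul_right c

theorem summable_discountedStepₗ_pow (hP : IsKernel P) (hpo : IsPolicy po) (hγ0 : 0 ≤ γ)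
    (hγ1 : γ < 1) (v : S → ℝ) (x : S) : Summable fun t => (discountedStepₗ P γ po ^ t) v x :=
  (hasSum_geometric_mul hγ0 hγ1 _).summable.of_norm_bounded fun t =>
    abs_discountedStepₗ_pow_le hP hpo hγ0 (fun z => single_le_sum (f := fun z => |v z|)
      (fun _ _ => abs_nonneg _) (mem_univ z)) t x

def Npolₗ (hP : IsKernel P) (hpo : IsPolicy po) (hγ0 : 0 ≤ γ) (hγ1 : γ < 1) :
    Module.End ℝ (S → ℝ) where
  toFun := Npol P γ po
  map_add' u v := by
    ext x
    simp only [Npol_eq_tsum, map_add, Pi.add_apply]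
    exact (summable_discountedStepₗ_pow hP hpo hγ0 hγ1 u x).tsum_add
      (summable_discountedStepₗ_pow hP hpo hγ0 hγ1 v x)
  map_smul' c u := by
    ext x
    simp only [Npol_eq_tsum, map_smul, Pi.smul_apply, smul_eq_mul, RingHom.id_apply, tsum_mul_left]

theorem Npol_mono (hP : IsKernel P) (hpo : IsPolicy po) (hγ0 : 0 ≤ γ) (hγ1 : γ < 1) :
    Monotone (Npol P γ po) := by
  intro u v h x
  simp only [Npol_eq_tsum]
  refine Summable.tsum_le_tsum (fun t => ?_) (summable_discountedStepₗ_pow hP hpo hγ0 hγ1 u x)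
    (summable_discountedStepₗ_pow hP hpo hγ0 hγ1 v x)
  rw [Module.End.pow_apply, Module.End.pow_apply]
  exact (discountedStepₗ_mono hP hpo hγ0).iterate t h x

theorem abs_Npol_le (hP : IsKernel P) (hpo : IsPolicy po) (hγ0 : 0 ≤ γ) (hγ1 : γ < 1)
    {v : S → ℝ} {c : ℝ} (hv : ∀ z, |v z| ≤ c) (x : S) : |Npol P γ po v x| ≤ c / (1 - γ) := by
  rw [Npol_eq_tsum]
  exact tsum_of_norm_bounded (f := fun t => (discountedStepₗ P γ po ^ t) v x)
    (hasSum_geometric_mul hγ0 hγ1 c) fun t => abs_discountedStepₗ_pow_le hP hpo hγ0 hv t x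

open Filter Topology in
theorem Npol_eq_of_eq_add_discountedStepₗ (hP : IsKernel P) (hpo : IsPolicy po) (hγ0 : 0 ≤ γ)
    (hγ1 : γ < 1) {g u : S → ℝ} (hu : u = g + discountedStepₗ P γ po u) : Npol P γ po g = u := by
  ext x
  rw [Npol_eq_tsum]
  have hg : g = (1 - discountedStepₗ P γ po) u := by
    rw [LinearMap.sub_apply, Module.End.one_apply]
    nth_rewrite 1 [hu]
    abel
  have hpart : ∀ n, ∑ t ∈ range n, (discountedStepₗ P γ po ^ t) g x
      = u x - (discountedStepₗ P γ po ^ n) u x := fun n => by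
    simpa [hg, Finset.sum_apply] using congrArg (fun L : Module.End ℝ (S → ℝ) => L u x)
      (geom_sum_mul_neg (discountedStepₗ P γ po) n)
  have hvanish : Tendsto (fun n => (discountedStepₗ P γ po ^ n) u x) atTop (𝓝 0) :=
    squeeze_zero_norm (fun n => abs_discountedStepₗ_pow_le hP hpo hγ0 (fun z => single_le_sum
        (f := fun z => |u z|) (fun _ _ => abs_nonneg _) (mem_univ z)) n x)
      (by simpa using (tendsto_pow_atTop_nhds_zero_of_lt_one hγ0 hγ1).mul_const (∑ z, |u z|))
  refine tendsto_nhds_unique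
    (summable_discountedStepₗ_pow hP hpo hγ0 hγ1 g x).hasSum.tendsto_sum_nat ?_
  simpa only [hpart, sub_zero] using (tendsto_const_nhds (x := u x)).sub hvanish

theorem polAct_sub_eq_Npol (hP : IsKernel P) (hpo : IsPolicy po) (hγ0 : 0 ≤ γ) (hγ1 : γ < 1)
    (r : S → A → ℝ) {Q : S → A → ℝ} (hQ : bellmanOp P r γ po Q = Q) (q : S → A → ℝ) :
    polAct po Q - polAct po q = Npol P γ po (polAct po (bellmanOp P r γ po q - q)) := by
  refine (Npol_eq_of_eq_add_discountedStepₗ hP hpo hγ0 hγ1 ?_).symm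
  have hT : ∀ f, bellmanOp P r γ po f = r + γ • mdpPₗ P (polActₗ po f) := fun _ => rfl
  change polActₗ po Q - polActₗ po q
    = polActₗ po (bellmanOp P r γ po q - q) + γ • polActₗ po (mdpPₗ P (polActₗ po Q - polActₗ po q))
  nth_rewrite 1 [← hQ]
  simp only [hT, map_add, map_sub, map_smul]
  module

end Resolvent

theorem sum_Icc_one_eq_sum_range {M : Type*} [AddCommMonoid M] (f : ℕ → M) :
    ∀ k, ∑ i ∈ Icc 1 k, f i = ∑ i ∈ range k, f (i + 1)
  | 0 => rfl
  | k + 1 => by rw [sum_Icc_succ_top (by omega), sum_Icc_one_eq_sum_range f k, sum_range_succ]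

theorem sum_Icc_pow_mul_pow_sub (γ α : ℝ) (k : ℕ) :
    ∑ j ∈ Icc 1 k, γ ^ j * α ^ (k - j) = ∑ j ∈ range k, γ ^ (k - j) * α ^ j := by
  rw [sum_Icc_one_eq_sum_range, ← sum_range_reflect]
  refine sum_congr rfl fun j hj => ?_
  have hjk := mem_range.1 hj
  rw [show k - 1 - j + 1 = k - j by omega, show k - (k - j) = j by omega]

section Rollout

variable {S A : Type} [Fintype S] [Fintype A] {P : S → A → S → ℝ} {γ : ℝ}
  {σ : ℕ → S → A → ℝ}

def rollout (P : S → A → S → ℝ) (γ : ℝ) (σ : ℕ → S → A → ℝ) (s k : ℕ)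
    (F : ℕ → S → A → ℝ) : S → A → ℝ :=
  ∑ j ∈ Icc 1 k, γ ^ j • PprodN P σ (s - j) j (F (k - j))

theorem Ppi_PprodN_sub {s j : ℕ} (h : j ≤ s) (q : S → A → ℝ) :
    Ppi P (σ s) (PprodN P σ (s - j) j q) = PprodN P σ (s - j) (j + 1) q := by
  rw [PprodN_succ, Nat.sub_add_cancel h]

theorem rollout_succ {s k : ℕ} (hks : k ≤ s) (F : ℕ → S → A → ℝ) :
    rollout P γ σ (s + 1) (k + 1) F = γ • Ppi P (σ s) (F k + rollout P γ σ s k F) := by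
  rw [rollout, rollout, sum_Icc_one_eq_sum_range, sum_Icc_one_eq_sum_range, sum_range_succ',
    add_comm, ← coe_Ppiₗ P (σ s), map_add, map_sum, smul_add, smul_sum]
  congr 1
  · simp [coe_Ppiₗ, PprodN]
  · refine sum_congr rfl fun j hj => ?_
    have hjk := mem_range.1 hj
    rw [Nat.add_sub_add_right, Nat.add_sub_add_right, map_smul, coe_Ppiₗ,
      Ppi_PprodN_sub (by omega), smul_smul, ← pow_succ']

theorem le_add_rollout_of_le (hP : IsKernel P) (hσ : ∀ i, IsPolicy (σ i)) (hγ0 : 0 ≤ γ) (d : ℕ)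
    {Δ F : ℕ → S → A → ℝ} (h0 : Δ 0 ≤ F 0)
    (hsucc : ∀ m, Δ (m + 1) ≤ F (m + 1) + γ • Ppi P (σ (m + d)) (Δ m)) :
    ∀ m, Δ m ≤ F m + rollout P γ σ (m + d) m F
  | 0 => by simpa [rollout] using h0
  | m + 1 => calc
      Δ (m + 1) ≤ F (m + 1) + γ • Ppi P (σ (m + d)) (Δ m) := hsucc m
      _ ≤ F (m + 1) + γ • Ppi P (σ (m + d)) (F m + rollout P γ σ (m + d) m F) := by
        gcongr
        exact Ppi_mono hP (hσ _) (le_add_rollout_of_le hP hσ hγ0 d h0 hsucc m)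
      _ = F (m + 1) + rollout P γ σ (m + 1 + d) (m + 1) F := by
        rw [Nat.add_right_comm, rollout_succ (by omega)]

theorem add_rollout_le_of_le (hP : IsKernel P) (hσ : ∀ i, IsPolicy (σ i)) (hγ0 : 0 ≤ γ) (d : ℕ)
    {Δ F : ℕ → S → A → ℝ} (h0 : F 0 ≤ Δ 0)
    (hsucc : ∀ m, F (m + 1) + γ • Ppi P (σ (m + d)) (Δ m) ≤ Δ (m + 1)) :
    ∀ m, F m + rollout P γ σ (m + d) m F ≤ Δ m
  | 0 => by simpa [rollout] using h0
  | m + 1 => calc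
      F (m + 1) + rollout P γ σ (m + 1 + d) (m + 1) F
          = F (m + 1) + γ • Ppi P (σ (m + d)) (F m + rollout P γ σ (m + d) m F) := by
        rw [Nat.add_right_comm, rollout_succ (by omega)]
      _ ≤ F (m + 1) + γ • Ppi P (σ (m + d)) (Δ m) := by
        gcongr
        exact Ppi_mono hP (hσ _) (add_rollout_le_of_le hP hσ hγ0 d h0 hsucc m)
      _ ≤ Δ (m + 1) := hsucc m

theorem abs_rollout_le (hP : IsKernel P) (hσ : ∀ i, IsPolicy (σ i)) (hγ0 : 0 ≤ γ)
    {F : ℕ → S → A → ℝ} {c : ℕ → ℝ} (hF : ∀ i x a, |F i x a| ≤ c i) (s k : ℕ) (x : S) (a : A) :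
    |rollout P γ σ s k F x a| ≤ ∑ j ∈ Icc 1 k, γ ^ j * c (k - j) := by
  simp only [rollout, Finset.sum_apply, Pi.smul_apply, smul_eq_mul]
  refine (abs_sum_le_sum_abs _ _).trans (sum_le_sum fun j _ => ?_)
  rw [abs_mul, abs_of_nonneg (pow_nonneg hγ0 _)]
  exact mul_le_mul_of_nonneg_left (abs_PprodN_le hP hσ (hF _) _ _ _ _) (pow_nonneg hγ0 _)

end Rollout

section MDVI

def incrementDrive {S A : Type} (α : ℝ) (r : S → A → ℝ) (εf Ef : ℕ → S → A → ℝ) (i : ℕ) :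
    S → A → ℝ :=
  (1 - α) • (α ^ i • r + (εf (i + 1) - (1 - α) • Ef i))

theorem incrementDrive_sub {S A : Type} (α : ℝ) (r : S → A → ℝ) (εf Ef : ℕ → S → A → ℝ)
    {k j : ℕ} (hj : j ≤ k) :
    incrementDrive α r εf Ef (k - j) = (1 - α) • (α ^ (k - j) • r
      + fun x' a' => εf (k + 1 - j) x' a' - (1 - α) * Ef (k - j) x' a') := by
  rw [incrementDrive, Nat.sub_add_comm hj]
  rfl

variable {S A : Type} [Fintype S] {P : S → A → S → ℝ} {r : S → A → ℝ} {α γ : ℝ}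
  {w v : ℕ → S → ℝ} {sq εf Ef : ℕ → S → A → ℝ} {pol : ℕ → S → A}

/-- The MDVI recursion, with the sampled backup `r + (γ/M) ∑ₘ v_k(y_{k,m})` written as
`r + ε_{k+1} + γ P v_k`. -/
structure IsMDVIRun (P : S → A → S → ℝ) (r : S → A → ℝ) (α γ : ℝ) (w v : ℕ → S → ℝ)
    (sq εf Ef : ℕ → S → A → ℝ) (pol : ℕ → S → A) : Prop where
  sq_zero : sq 0 = 0
  w_zero : w 0 = 0
  v_zero : v 0 = 0
  v_succ : ∀ k, v (k + 1) = w (k + 1) - α • w k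
  sq_succ : ∀ k, sq (k + 1) = r + εf (k + 1) + γ • mdpP P (v k) + α • sq k
  w_succ : ∀ k x, w (k + 1) x = ⨆ a, sq (k + 1) x a
  sq_le_sq_pol : ∀ k x a, sq k x a ≤ sq k x (pol k x)
  Ef_eq : ∀ k x a, Ef k x a = ∑ j ∈ range k, α ^ (k - 1 - j) * εf (j + 1) x a

theorem IsMDVIRun.of_samples {M : ℕ} {y : ℕ → ℕ → S → A → S} {qv : ℕ → S → A → ℝ}
    (hs0 : ∀ x a, sq 0 x a = 0) (hw0 : ∀ x, w 0 x = 0)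
    (hv : ∀ k x, v k x = w k x - α * w (k - 1) x)
    (hqv : ∀ k x a, qv (k + 1) x a = r x a + (γ / (M : ℝ)) * ∑ m ∈ range M, v k (y k m x a))
    (hsq : ∀ k x a, sq (k + 1) x a = qv (k + 1) x a + α * sq k x a)
    (hwk : ∀ k x, w (k + 1) x = ⨆ a, sq (k + 1) x a)
    (hgreedy : ∀ k x a, sq k x a ≤ sq k x (pol k x))
    (hεf : ∀ k x a, εf (k + 1) x a
      = (γ / (M : ℝ)) * ∑ m ∈ range M, v k (y k m x a) - γ * mdpP P (v k) x a)
    (hEf : ∀ k x a, Ef k x a = ∑ j ∈ range k, α ^ (k - 1 - j) * εf (j + 1) x a) :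
    IsMDVIRun P r α γ w v sq εf Ef pol where
  sq_zero := funext fun x => funext (hs0 x)
  w_zero := funext hw0
  v_zero := funext fun x => by simp [hv, hw0]
  v_succ k := funext fun x => by simp [hv]
  sq_succ k := by
    ext x a
    simp only [Pi.add_apply, Pi.smul_apply, smul_eq_mul, hsq, hqv, hεf]
    ring
  w_succ := hwk
  sq_le_sq_pol := hgreedy
  Ef_eq := hEf

namespace IsMDVIRun

variable (run : IsMDVIRun P r α γ w v sq εf Ef pol)
include run

theorem Ef_zero : Ef 0 = 0 := by
  ext x a; simp [run.Ef_eq]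

theorem Ef_succ (m : ℕ) : Ef (m + 1) = εf (m + 1) + α • Ef m := by
  ext x a
  simp only [run.Ef_eq, Pi.add_apply, Pi.smul_apply, smul_eq_mul, sum_range_succ, mul_sum,
    Nat.add_sub_cancel, Nat.sub_self, pow_zero, one_mul]
  rw [add_comm]
  congr 1
  refine sum_congr rfl fun j hj => ?_
  rw [← mul_assoc, ← pow_succ', show m - 1 - j + 1 = m - j by have := mem_range.1 hj; omega]

theorem w_eq_sq_pol [Finite A] : ∀ m x, w m x = sq m x (pol m x)
  | 0, x => by simp [run.w_zero, run.sq_zero]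
  | m + 1, x =>
    have : Nonempty A := ⟨pol 0 x⟩
    (run.w_succ m x).trans <| le_antisymm (ciSup_le (run.sq_le_sq_pol (m + 1) x))
      (le_ciSup (Finite.bddAbove_range _) (pol (m + 1) x))

theorem one_sub_smul_sq_succ : ∀ m, (1 - α) • sq (m + 1)
    = (1 - α ^ (m + 1)) • r + (1 - α) • (γ • mdpP P (w m) + Ef (m + 1))
  | 0 => by
    rw [run.sq_succ, run.Ef_succ, run.v_zero, run.w_zero, run.sq_zero, run.Ef_zero, ← coe_mdpPₗ,
      map_zero]
    module
  | m + 1 => by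
    have ih := one_sub_smul_sq_succ m
    rw [run.sq_succ, run.v_succ, run.Ef_succ, ← coe_mdpPₗ, map_sub, map_smul]
    rw [← coe_mdpPₗ] at ih
    linear_combination (norm := module) α • ih

theorem increment_zero : (1 - α) • (sq 1 - sq 0) = incrementDrive α r εf Ef 0 := by
  rw [incrementDrive, smul_sub, run.one_sub_smul_sq_succ 0, run.sq_zero, run.w_zero, run.Ef_succ,
    run.Ef_zero, ← coe_mdpPₗ, map_zero]
  module

theorem increment_succ (m : ℕ) : (1 - α) • (sq (m + 1 + 1) - sq (m + 1))
    = incrementDrive α r εf Ef (m + 1) + γ • mdpP P ((1 - α) • (w (m + 1) - w m)) := by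
  rw [smul_sub, run.one_sub_smul_sq_succ, run.one_sub_smul_sq_succ, run.Ef_succ (m + 1),
    incrementDrive, ← coe_mdpPₗ, map_smul, map_sub]
  module

theorem polAct_increment_le [Fintype A] [DecidableEq A] (hα1 : α ≤ 1) (m : ℕ) :
    polAct (detPol (pol m)) ((1 - α) • (sq (m + 1) - sq m)) ≤ (1 - α) • (w (m + 1) - w m) := by
  intro x
  simp only [polAct_detPol, Pi.smul_apply, Pi.sub_apply, smul_eq_mul, run.w_eq_sq_pol]
  exact mul_le_mul_of_nonneg_left (by linarith [run.sq_le_sq_pol (m + 1) x (pol m x)])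
    (by linarith)

theorem increment_le_polAct [Fintype A] [DecidableEq A] (hα1 : α ≤ 1) (m : ℕ) :
    (1 - α) • (w (m + 1) - w m)
      ≤ polAct (detPol (pol (m + 1))) ((1 - α) • (sq (m + 1) - sq m)) := by
  intro x
  simp only [polAct_detPol, Pi.smul_apply, Pi.sub_apply, smul_eq_mul, run.w_eq_sq_pol]
  exact mul_le_mul_of_nonneg_left (by linarith [run.sq_le_sq_pol m x (pol (m + 1) x)])
    (by linarith)

theorem increment_le_rollout [Fintype A] [DecidableEq A] (hP : IsKernel P) (hγ0 : 0 ≤ γ)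
    (hα1 : α ≤ 1) : ∀ m, (1 - α) • (sq (m + 1) - sq m) ≤ incrementDrive α r εf Ef m
      + rollout P γ (fun i => detPol (pol i)) (m + 1) m (incrementDrive α r εf Ef) :=
  le_add_rollout_of_le hP (fun i => detPol_isPolicy (pol i)) hγ0 1 run.increment_zero.le
    fun m => by
      rw [run.increment_succ]
      gcongr
      exact mdpP_mono hP (run.increment_le_polAct hα1 m)

theorem rollout_le_increment [Fintype A] [DecidableEq A] (hP : IsKernel P) (hγ0 : 0 ≤ γ)
    (hα1 : α ≤ 1) : ∀ m, incrementDrive α r εf Ef m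
      + rollout P γ (fun i => detPol (pol i)) m m (incrementDrive α r εf Ef)
      ≤ (1 - α) • (sq (m + 1) - sq m) :=
  add_rollout_le_of_le hP (fun i => detPol_isPolicy (pol i)) hγ0 0 run.increment_zero.ge
    fun m => by
      rw [run.increment_succ]
      gcongr
      exact mdpP_mono hP (run.polAct_increment_le hα1 m)

theorem polAct_smul_sq_le [Fintype A] {po : S → A → ℝ} (hpo : IsPolicy po) (hα1 : α ≤ 1)
    (m : ℕ) (x : S) : polAct po ((1 - α) • sq m) x ≤ (1 - α) * w m x :=
  polAct_le_of_forall_le hpo fun a => by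
    rw [run.w_eq_sq_pol]
    exact mul_le_mul_of_nonneg_left (run.sq_le_sq_pol m x a) (by linarith)

theorem polAct_detPol_smul_sq [Fintype A] [DecidableEq A] (m : ℕ) (x : S) :
    polAct (detPol (pol m)) ((1 - α) • sq m) x = (1 - α) * w m x := by
  simp [polAct_detPol, run.w_eq_sq_pol]

theorem bellmanOp_sub_eq [Fintype A] (po : S → A → ℝ) (n : ℕ) :
    bellmanOp P r γ po ((1 - α) • sq (n + 1)) - (1 - α) • sq (n + 1)
      = α ^ (n + 1) • r - (1 - α) • Ef (n + 1)
        + γ • mdpP P (polAct po ((1 - α) • sq (n + 1)) - (1 - α) • w n) := by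
  rw [bellmanOp_eq, run.one_sub_smul_sq_succ n, ← coe_mdpPₗ, map_sub, map_smul]
  module

theorem bellmanOp_sub_le [Fintype A] [DecidableEq A] (hP : IsKernel P) {po : S → A → ℝ}
    (hpo : IsPolicy po) (hγ0 : 0 ≤ γ) (hα1 : α ≤ 1) (n : ℕ) :
    bellmanOp P r γ po ((1 - α) • sq (n + 1)) - (1 - α) • sq (n + 1)
      ≤ α ^ (n + 1) • r - (1 - α) • Ef (n + 1)
        + rollout P γ (fun i => detPol (pol i)) (n + 1 + 1) (n + 1) (incrementDrive α r εf Ef) := by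
  rw [run.bellmanOp_sub_eq, rollout_succ (Nat.le_succ n)]
  gcongr
  refine mdpP_mono hP fun x => ?_
  have hgreedy := run.polAct_smul_sq_le hpo hα1 (n + 1) x
  calc polAct po ((1 - α) • sq (n + 1)) x - ((1 - α) • w n) x
      ≤ ((1 - α) • (w (n + 1) - w n)) x := by
        simp only [Pi.smul_apply, Pi.sub_apply, smul_eq_mul]; linarith
    _ ≤ polAct (detPol (pol (n + 1))) ((1 - α) • (sq (n + 1) - sq n)) x :=
      run.increment_le_polAct hα1 n x
    _ ≤ _ := polAct_mono (detPol_isPolicy _) (run.increment_le_rollout hP hγ0 hα1 n) x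

theorem le_bellmanOp_sub [Fintype A] [DecidableEq A] (hP : IsKernel P) (hγ0 : 0 ≤ γ)
    (hα1 : α ≤ 1) (n : ℕ) :
    α ^ (n + 1) • r - (1 - α) • Ef (n + 1)
        + rollout P γ (fun i => detPol (pol i)) (n + 1) (n + 1) (incrementDrive α r εf Ef)
      ≤ bellmanOp P r γ (detPol (pol (n + 1))) ((1 - α) • sq (n + 1)) - (1 - α) • sq (n + 1) := by
  rw [run.bellmanOp_sub_eq, rollout_succ le_rfl]
  gcongr
  refine mdpP_mono hP fun x => ?_
  calc _ ≤ polAct (detPol (pol n)) ((1 - α) • (sq (n + 1) - sq n)) x :=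
        polAct_mono (detPol_isPolicy _) (run.rollout_le_increment hP hγ0 hα1 n) x
    _ ≤ ((1 - α) • (w (n + 1) - w n)) x := run.polAct_increment_le hα1 n x
    _ = _ := by
      rw [Pi.sub_apply, run.polAct_detPol_smul_sq]
      simp only [Pi.smul_apply, Pi.sub_apply, smul_eq_mul]
      ring

end IsMDVIRun

end MDVI

section ErrorPropagation

variable {S A : Type} [Fintype S] [Fintype A] {P : S → A → S → ℝ} {γ : ℝ}

theorem polAct_sub_polAct_le (hP : IsKernel P) (hγ0 : 0 ≤ γ) (hγ1 : γ < 1) (r : S → A → ℝ)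
    {po po' : S → A → ℝ} (hpo : IsPolicy po) (hpo' : IsPolicy po') {Q Q' : S → A → ℝ}
    (hQ : bellmanOp P r γ po Q = Q) (hQ' : bellmanOp P r γ po' Q' = Q') {q : S → A → ℝ}
    (hq : polAct po q ≤ polAct po' q) (x : S) :
    polAct po Q x - polAct po' Q' x
      ≤ Npol P γ po (polAct po (bellmanOp P r γ po q - q)) x
        - Npol P γ po' (polAct po' (bellmanOp P r γ po' q - q)) x := by
  have h := congrFun (polAct_sub_eq_Npol hP hpo hγ0 hγ1 r hQ q) x
  have h' := congrFun (polAct_sub_eq_Npol hP hpo' hγ0 hγ1 r hQ' q) x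
  simp only [Pi.sub_apply] at h h'
  linarith [hq x]

theorem Npol_polAct_rollout_eq (hP : IsKernel P) (hγ0 : 0 ≤ γ) (hγ1 : γ < 1) {po : S → A → ℝ}
    (hpo : IsPolicy po) (σ : ℕ → S → A → ℝ) (α : ℝ) (r E : S → A → ℝ) {F H : ℕ → S → A → ℝ}
    (s k : ℕ) (hF : ∀ j ∈ Icc 1 k, F (k - j) = (1 - α) • (α ^ (k - j) • r + H j)) (x : S) :
    Npol P γ po (polAct po (α ^ k • r - (1 - α) • E + rollout P γ σ s k F)) x
      = Npol P γ po (polAct po (α ^ k • r + (1 - α) • rollout P γ σ s k (fun i => α ^ i • r))) x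
        - (1 - α) * Npol P γ po (polAct po E) x
        + (1 - α) * ∑ j ∈ Icc 1 k,
            γ ^ j * Npol P γ po (polAct po (PprodN P σ (s - j) j (H j))) x := by
  have hroll : rollout P γ σ s k F = (1 - α) • (rollout P γ σ s k (fun i => α ^ i • r)
      + ∑ j ∈ Icc 1 k, γ ^ j • PprodN P σ (s - j) j (H j)) := by
    simp only [rollout, ← sum_add_distrib, smul_sum]
    refine sum_congr rfl fun j hj => ?_
    rw [hF j hj, ← coe_PprodNₗ, map_smul, map_add]
    module
  have hL : ∀ f, Npol P γ po (polAct po f) = (Npolₗ hP hpo hγ0 hγ1 ∘ₗ polActₗ po) f :=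
    fun _ => rfl
  simp only [hroll, hL, map_add, map_sub, map_smul, map_sum, Pi.add_apply, Pi.sub_apply,
    Pi.smul_apply, smul_eq_mul, Finset.sum_apply]
  ring

theorem abs_Npol_polAct_reward_le (hP : IsKernel P) {σ : ℕ → S → A → ℝ}
    (hσ : ∀ i, IsPolicy (σ i)) {po : S → A → ℝ} (hpo : IsPolicy po) (hγ0 : 0 ≤ γ) (hγ1 : γ < 1)
    {α : ℝ} (hα0 : 0 ≤ α) (hα1 : α ≤ 1) {r : S → A → ℝ} (hr : ∀ x a, |r x a| ≤ 1)
    (s k : ℕ) (x : S) :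
    |Npol P γ po (polAct po (α ^ k • r + (1 - α) • rollout P γ σ s k (fun i => α ^ i • r))) x|
      ≤ (α ^ k + (1 - α) * ∑ j ∈ Icc 1 k, γ ^ j * α ^ (k - j)) / (1 - γ) := by
  have hαr : ∀ i y a, |(α ^ i • r) y a| ≤ α ^ i := fun i y a => by
    simpa [abs_mul, abs_of_nonneg (pow_nonneg hα0 i)] using
      mul_le_mul_of_nonneg_left (hr y a) (pow_nonneg hα0 i)
  refine abs_Npol_le hP hpo hγ0 hγ1 (abs_polAct_le hpo fun y a => ?_) x
  refine (abs_add_le _ _).trans (add_le_add (hαr k y a) ?_)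
  rw [Pi.smul_apply, Pi.smul_apply, smul_eq_mul, abs_mul, abs_of_nonneg (sub_nonneg.2 hα1)]
  exact mul_le_mul_of_nonneg_left (abs_rollout_le hP hσ hγ0 hαr s k y a) (sub_nonneg.2 hα1)

end ErrorPropagation

theorem mdvi_error_propagation_last_policy_general
    (α : ℝ) (hα0 : 0 ≤ α) (hα1 : α < 1)
    (S A : Type) [Fintype S] [Fintype A] [DecidableEq A]
    (P : S → A → S → ℝ) (hP : IsKernel P)
    (r : S → A → ℝ) (hr : ∀ x a, |r x a| ≤ 1)
    (γ H : ℝ) (hγ0 : 0 ≤ γ) (hγ1 : γ < 1) (hH : H = 1 / (1 - γ))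
    (Qpol : (S → A → ℝ) → S → A → ℝ)
    (hQ : ∀ po, IsPolicy po → bellmanOp P r γ po (Qpol po) = Qpol po)
    (pstar : S → A → ℝ) (hpstar : IsPolicy pstar)
    (hopt : ∀ po, IsPolicy po → ∀ x, polAct po (Qpol po) x ≤ polAct pstar (Qpol pstar) x)
    (K M : ℕ)
    (y : ℕ → ℕ → S → A → S)
    (w v : ℕ → S → ℝ) (sq qv : ℕ → S → A → ℝ)
    (hs0 : ∀ x a, sq 0 x a = 0) (hw0 : ∀ x, w 0 x = 0)
    (hv : ∀ k x, v k x = w k x - α * w (k - 1) x)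
    (hqv : ∀ k x a, qv (k + 1) x a
      = r x a + (γ / (M : ℝ)) * ∑ m ∈ Finset.range M, v k (y k m x a))
    (hsq : ∀ k x a, sq (k + 1) x a = qv (k + 1) x a + α * sq k x a)
    (hwk : ∀ k x, w (k + 1) x = ⨆ a, sq (k + 1) x a)
    (pol : ℕ → S → A)
    (hgreedy : ∀ k x a, sq k x a ≤ sq k x (pol k x))
    (εf Ef : ℕ → S → A → ℝ)
    (hεf : ∀ k x a, εf (k + 1) x a
      = (γ / (M : ℝ)) * ∑ m ∈ Finset.range M, v k (y k m x a) - γ * mdpP P (v k) x a)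
    (hEf : ∀ k x a, Ef k x a = ∑ j ∈ Finset.range k, α ^ (k - 1 - j) * εf (j + 1) x a)
    :
    ∀ k ∈ Finset.Icc 1 K, ∀ x,
      0 ≤ polAct pstar (Qpol pstar) x
            - polAct (detPol (pol k)) (Qpol (detPol (pol k))) x ∧
      polAct pstar (Qpol pstar) x - polAct (detPol (pol k)) (Qpol (detPol (pol k))) x ≤
        2 * H * (α ^ k +
            (∑ j ∈ Finset.range k, γ ^ (k - j) * α ^ j) / ((1 : ℝ) / (1 - α)))
        + (1 / ((1 : ℝ) / (1 - α))) *
            (Npol P γ (detPol (pol k)) (polAct (detPol (pol k)) (Ef k)) x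
              - Npol P γ pstar (polAct pstar (Ef k)) x)
        + (1 / ((1 : ℝ) / (1 - α))) * ∑ j ∈ Finset.Icc 1 k, γ ^ j *
            (Npol P γ pstar (polAct pstar
                (PprodN P (fun i => detPol (pol i)) (k + 1 - j) j
                  (fun x' a' => εf (k + 1 - j) x' a' - (1 - α) * Ef (k - j) x' a'))) x
              - Npol P γ (detPol (pol k)) (polAct (detPol (pol k))
                (PprodN P (fun i => detPol (pol i)) (k - j) j
                  (fun x' a' => εf (k + 1 - j) x' a' - (1 - α) * Ef (k - j) x' a'))) x) := by
  intro k hk x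
  have hπ : ∀ i, IsPolicy (detPol (pol i)) := fun i => detPol_isPolicy (pol i)
  refine ⟨sub_nonneg.2 (hopt _ (hπ k) x), ?_⟩
  obtain ⟨n, rfl⟩ : ∃ n, k = n + 1 := ⟨k - 1, by have := (mem_Icc.1 hk).1; omega⟩
  have run := IsMDVIRun.of_samples hs0 hw0 hv hqv hsq hwk hgreedy hεf hEf
  have hgap := polAct_sub_polAct_le hP hγ0 hγ1 r hpstar (hπ (n + 1)) (hQ _ hpstar) (hQ _ (hπ _))
    (fun y => (run.polAct_smul_sq_le hpstar hα1.le (n + 1) y).trans_eq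
      (run.polAct_detPol_smul_sq (n + 1) y).symm) x
  have hup := Npol_mono hP hpstar hγ0 hγ1
    (polAct_mono hpstar (run.bellmanOp_sub_le hP hpstar hγ0 hα1.le n)) x
  have hlo := Npol_mono hP (hπ (n + 1)) hγ0 hγ1
    (polAct_mono (hπ (n + 1)) (run.le_bellmanOp_sub hP hγ0 hα1.le n)) x
  have hF j (hj : j ∈ Icc 1 (n + 1)) := incrementDrive_sub α r εf Ef (mem_Icc.1 hj).2
  rw [Npol_polAct_rollout_eq hP hγ0 hγ1 hpstar _ α r _ _ _ hF] at hup
  rw [Npol_polAct_rollout_eq hP hγ0 hγ1 (hπ (n + 1)) _ α r _ _ _ hF] at hlo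
  have hRu := abs_le.1 (abs_Npol_polAct_reward_le hP hπ hpstar hγ0 hγ1 hα0 hα1.le hr
    (n + 1 + 1) (n + 1) x)
  have hRl := abs_le.1 (abs_Npol_polAct_reward_le hP hπ (hπ (n + 1)) hγ0 hγ1 hα0 hα1.le hr
    (n + 1) (n + 1) x)
  rw [hH, one_div_one_div, ← sum_Icc_pow_mul_pow_sub, div_div_eq_mul_div, div_one]
  simp only [mul_sub, sum_sub_distrib]
  linear_combination hgap + hup + hlo + hRu.2 + hRl.1

/-- Lemma 4.9: error propagation for the last MDVI policy. -/
theorem mdvi_error_propagation_last_policy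
    (α : ℝ) (hα0 : 0 ≤ α) (hα1 : α < 1)
    (S A : Type) [Fintype S] [Fintype A] [Nonempty S] [Nonempty A] [DecidableEq A]
    (P : S → A → S → ℝ) (hP : IsKernel P)
    (r : S → A → ℝ) (hr : ∀ x a, |r x a| ≤ 1)
    (γ H : ℝ) (hγ0 : 0 ≤ γ) (hγ1 : γ < 1) (hH : H = 1 / (1 - γ))
    (Qpol : (S → A → ℝ) → S → A → ℝ)
    (hQ : ∀ po, IsPolicy po → bellmanOp P r γ po (Qpol po) = Qpol po)
    (pstar : S → A → ℝ) (hpstar : IsPolicy pstar)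
    (hopt : ∀ po, IsPolicy po → ∀ x, polAct po (Qpol po) x ≤ polAct pstar (Qpol pstar) x)
    (K M : ℕ) (hM : 1 ≤ M)
    (y : ℕ → ℕ → S → A → S)
    (w v : ℕ → S → ℝ) (sq qv : ℕ → S → A → ℝ)
    (hs0 : ∀ x a, sq 0 x a = 0) (hw0 : ∀ x, w 0 x = 0)
    (hv : ∀ k x, v k x = w k x - α * w (k - 1) x)
    (hqv : ∀ k x a, qv (k + 1) x a
      = r x a + (γ / (M : ℝ)) * ∑ m ∈ Finset.range M, v k (y k m x a))
    (hsq : ∀ k x a, sq (k + 1) x a = qv (k + 1) x a + α * sq k x a)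
    (hwk : ∀ k x, w (k + 1) x = ⨆ a, sq (k + 1) x a)
    (pol : ℕ → S → A)
    (hgreedy : ∀ k x a, sq k x a ≤ sq k x (pol k x))
    (εf Ef : ℕ → S → A → ℝ)
    (hεf : ∀ k x a, εf (k + 1) x a
      = (γ / (M : ℝ)) * ∑ m ∈ Finset.range M, v k (y k m x a) - γ * mdpP P (v k) x a)
    (hEf : ∀ k x a, Ef k x a = ∑ j ∈ Finset.range k, α ^ (k - 1 - j) * εf (j + 1) x a)
    :
    ∀ k ∈ Finset.Icc 1 K, ∀ x,
      0 ≤ polAct pstar (Qpol pstar) x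
            - polAct (detPol (pol k)) (Qpol (detPol (pol k))) x ∧
      polAct pstar (Qpol pstar) x - polAct (detPol (pol k)) (Qpol (detPol (pol k))) x ≤
        2 * H * (α ^ k +
            (∑ j ∈ Finset.range k, γ ^ (k - j) * α ^ j) / ((1 : ℝ) / (1 - α)))
        + (1 / ((1 : ℝ) / (1 - α))) *
            (Npol P γ (detPol (pol k)) (polAct (detPol (pol k)) (Ef k)) x
              - Npol P γ pstar (polAct pstar (Ef k)) x)
        + (1 / ((1 : ℝ) / (1 - α))) * ∑ j ∈ Finset.Icc 1 k, γ ^ j *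
            (Npol P γ pstar (polAct pstar
                (PprodN P (fun i => detPol (pol i)) (k + 1 - j) j
                  (fun x' a' => εf (k + 1 - j) x' a' - (1 - α) * Ef (k - j) x' a'))) x
              - Npol P γ (detPol (pol k)) (polAct (detPol (pol k))
                (PprodN P (fun i => detPol (pol i)) (k - j) j
                  (fun x' a' => εf (k + 1 - j) x' a' - (1 - α) * Ef (k - j) x' a'))) x) :=
  mdvi_error_propagation_last_policy_general α hα0 hα1 S A P hP r hr γ H hγ0 hγ1 hH Qpol hQ pstar
    hpstar hopt K M y w v sq qv hs0 hw0 hv hqv hsq hwk pol hgreedy εf Ef hεf hEf
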